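/- arXiv:2511.11189 — 4 statements merged into one kernel-verified Lean document; each statement's English description precedes it below -/
import Mathlib

section
/- Let d ≥ 2 and let u_0, u_1, …, u_d be unit vectors in ℝ^d. The following are equivalent: (a) there exists no nonzero vector e ∈ ℝ^d with ⟨e, u_0⟩ = 0 and ⟨e, u_i⟩ ≤ 0 for all i ∈ {1,…,d} (i.e., no closed half-sphere of S^{d−1} whose bounding great subsphere passes through u_0 contains all of u_1,…,u_d); (b) the origin belongs to the interior, computed within the hyperplane u_0^⊥, of the convex hull of the orthogonal projections of u_1,…,u_d onto u_0^⊥. -/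
/-! A point `x` lies in the interior of the convex hull of a nonempty set `s` in a
finite-dimensional space iff no nonzero `e` satisfies `⟪e, y⟫ ≤ ⟪e, x⟫` on `s`. If the hull has
nonempty interior this is the supporting hyperplane theorem; otherwise `s` lies in a proper affine
subspace and a normal vector of it, with the appropriate sign, does the job. Inside the hyperplane
`u₀ᗮ` we have `⟪e, proj y⟫ = ⟪e, y⟫`, so this criterion for the projected points is condition (a).
-/

open MeasureTheory Metric
open scoped RealInnerProductSpace

noncomputable section

/-- `Euc d` is the Euclidean space `ℝ^d`. -/
abbrev Euc (d : ℕ) := EuclideanSpace ℝ (Fin d)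

/-- The pointy condition: the origin belongs to the interior, computed within the hyperplane
`u₀ᗮ`, of the convex hull of the orthogonal projections of the points `u i` onto `u₀ᗮ`. -/
def Pointy {d k : ℕ} (u₀ : Euc d) (u : Fin k → Euc d) : Prop :=
  (0 : (Submodule.span ℝ {u₀})ᗮ) ∈ interior (convexHull ℝ
    (Set.range fun i => Submodule.orthogonalProjectionOnto (Submodule.span ℝ {u₀})ᗮ (u i)))

section

variable {E : Type*} [NormedAddCommGroup E] [InnerProductSpace ℝ E]

theorem inner_lt_of_mem_interior {A : Set E} {e x : E} {c : ℝ} (he : e ≠ 0)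
    (hA : ∀ a ∈ A, ⟪e, a⟫ ≤ c) (hx : x ∈ interior A) : ⟪e, x⟫ < c := by
  have hopen : IsOpenMap (innerSL ℝ e) :=
    (innerSL ℝ e).isOpenMap_of_ne_zero fun h0 => he <| by
      simpa using congrArg norm h0
  have hsub : innerSL ℝ e '' interior A ⊆ Set.Iio c := by
    rw [← interior_Iic]
    exact interior_maximal (Set.image_subset_iff.2 fun a ha => hA a (interior_subset ha))
      (hopen _ isOpen_interior)
  exact hsub ⟨x, hx, rfl⟩

variable [FiniteDimensional ℝ E]

theorem exists_ne_zero_inner_eq_of_affineSpan_ne_top {s : Set E} {a : E}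
    (hs : affineSpan ℝ s ≠ ⊤) (ha : a ∈ s) : ∃ e ≠ 0, ∀ x ∈ s, ⟪e, x⟫ = ⟪e, a⟫ := by
  set V := (affineSpan ℝ s).direction
  have hV : V ≠ ⊤ := fun h => hs <|
    (AffineSubspace.direction_eq_top_iff_of_nonempty ⟨a, subset_affineSpan ℝ s ha⟩).1 h
  obtain ⟨e, heV, he⟩ := Submodule.ne_bot_iff _ |>.1 (mt Submodule.orthogonal_eq_bot_iff.1 hV)
  refine ⟨e, he, fun x hx => ?_⟩
  have hxa : ⟪e, x - a⟫ = 0 := Submodule.inner_left_of_mem_orthogonal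
    (AffineSubspace.vsub_mem_direction (subset_affineSpan ℝ s hx) (subset_affineSpan ℝ s ha)) heV
  rwa [inner_sub_right, sub_eq_zero] at hxa

theorem Convex.exists_inner_le_of_notMem_interior {A : Set E} {x : E} (hA : Convex ℝ A)
    (hne : A.Nonempty) (hx : x ∉ interior A) : ∃ e ≠ 0, ∀ a ∈ A, ⟪e, a⟫ ≤ ⟪e, x⟫ := by
  by_cases hint : (interior A).Nonempty
  · obtain ⟨f, hf, hfA⟩ := geometric_hahn_banach_of_nonempty_interior_point hA hx hint
    refine ⟨(InnerProductSpace.toDual ℝ E).symm f, by simpa using hf, fun a ha => ?_⟩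
    simpa only [InnerProductSpace.toDual_symm_apply] using hfA a ha
  · obtain ⟨a₀, ha₀⟩ := hne
    obtain ⟨e, he, hconst⟩ := exists_ne_zero_inner_eq_of_affineSpan_ne_top
      (mt hA.interior_nonempty_iff_affineSpan_eq_top.2 hint) ha₀
    rcases le_total ⟪e, a₀⟫ ⟪e, x⟫ with h | h
    · exact ⟨e, he, fun a ha => (hconst a ha).trans_le h⟩
    · refine ⟨-e, neg_ne_zero.2 he, fun a ha => ?_⟩
      simpa only [inner_neg_left, neg_le_neg_iff, hconst a ha] using h

theorem mem_interior_convexHull_iff_not_exists_inner_le {s : Set E} {x : E}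
    (hs : s.Nonempty) :
    x ∈ interior (convexHull ℝ s) ↔ ¬∃ e ≠ 0, ∀ y ∈ s, ⟪e, y⟫ ≤ ⟪e, x⟫ := by
  refine ⟨fun hx ⟨e, he, hle⟩ => ?_, fun h => ?_⟩
  · have hhull : ∀ y ∈ convexHull ℝ s, ⟪e, y⟫ ≤ ⟪e, x⟫ :=
      convexHull_min hle (convex_halfSpace_le (innerₗ E e).isLinear _)
    exact (inner_lt_of_mem_interior he hhull hx).false
  · by_contra hx
    obtain ⟨e, he, hle⟩ :=
      (convex_convexHull ℝ s).exists_inner_le_of_notMem_interior hs.convexHull hx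
    exact h ⟨e, he, fun y hy => hle y (subset_convexHull ℝ s hy)⟩

end

theorem Submodule.exists_ne_zero_inner_orthogonalProjectionOnto_le_iff {E : Type*}
    [NormedAddCommGroup E] [InnerProductSpace ℝ E] (K : Submodule ℝ E) [K.HasOrthogonalProjection]
    {ι : Type*} (v : ι → E) (c : ℝ) :
    (∃ e : K, e ≠ 0 ∧ ∀ i, ⟪e, K.orthogonalProjectionOnto (v i)⟫ ≤ c) ↔
      ∃ e : E, e ≠ 0 ∧ e ∈ K ∧ ∀ i, ⟪e, v i⟫ ≤ c := by
  simp only [inner_orthogonalProjectionOnto_eq_of_mem_left]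
  exact ⟨fun ⟨e, he, hle⟩ => ⟨e, by simpa using he, e.2, hle⟩,
    fun ⟨e, he, heK, hle⟩ => ⟨⟨e, heK⟩, by simpa using he, hle⟩⟩

theorem pointy_characterization_general (d : ℕ) (u₀ : Euc d) (u : Fin d → Euc d)
    (h₀ : ‖u₀‖ = 1) :
    (¬ ∃ e : Euc d, e ≠ 0 ∧ ⟪e, u₀⟫ = 0 ∧ ∀ i, ⟪e, u i⟫ ≤ 0) ↔ Pointy u₀ u := by
  have : Nonempty (Fin d) := by
    rcases d with _ | d
    · simp [Subsingleton.elim u₀ 0] at h₀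
    · exact ⟨0⟩
  rw [Pointy, mem_interior_convexHull_iff_not_exists_inner_le (Set.range_nonempty _)]
  simp only [Set.forall_mem_range, inner_zero_right,
    Submodule.exists_ne_zero_inner_orthogonalProjectionOnto_le_iff,
    Submodule.mem_orthogonal_singleton_iff_inner_left]

/-- Characterization of the pointy condition: no closed half-sphere whose bounding great
subsphere passes through `u₀` contains all of `u₁, …, u_d`, if and only if the origin lies
in the interior (within the hyperplane `u₀ᗮ`) of the convex hull of the projections of
`u₁, …, u_d` onto `u₀ᗮ`. -/
theorem pointy_characterization (d : ℕ) (hd : 2 ≤ d) (u₀ : Euc d) (u : Fin d → Euc d)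
    (h₀ : ‖u₀‖ = 1) (h : ∀ i, ‖u i‖ = 1) :
    (¬ ∃ e : Euc d, e ≠ 0 ∧ ⟪e, u₀⟫ = 0 ∧ ∀ i, ⟪e, u i⟫ ≤ 0) ↔ Pointy u₀ u :=
  pointy_characterization_general d u₀ u h₀
end
end

section
/- Let d ≥ 2, let c, c' ∈ ℝ^d and let 0 < r ≤ r'. Suppose there exists a unit vector w ∈ ℝ^d such that for every unit vector v with ⟨v, w⟩ ≥ 0 the point c + r v does not belong to the open ball of center c' and radius r' (i.e., some closed hemisphere of the sphere of center c and radius r is disjoint from the open ball B(c', r')). Then ‖c − c'‖² ≥ (r')² − r². -/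
open MeasureTheory Metric
open scoped RealInnerProductSpace

noncomputable section

lemma exists_unit_nonneg_inner (d : ℕ) (hd : 2 ≤ d) (w a : Euc d) (hw : ‖w‖ = 1) :
    ∃ v : Euc d, ‖v‖ = 1 ∧ 0 ≤ ⟪v, w⟫ ∧ 0 ≤ ⟪v, a⟫ := by
  by_cases haw : 0 ≤ ⟪a, w⟫
  · by_cases ha : a = 0
    · exact ⟨w, hw, real_inner_self_nonneg, by rw [ha, inner_zero_right]⟩
    · refine ⟨‖a‖⁻¹ • a, ?_, ?_, ?_⟩
      · simp [norm_smul, norm_ne_zero_iff.mpr ha, abs_of_nonneg (norm_nonneg a),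
          inv_mul_cancel₀ (norm_ne_zero_iff.mpr ha)]
      · rw [real_inner_smul_left]
        positivity
      · rw [real_inner_smul_left, real_inner_self_eq_norm_sq]
        positivity
  · set b : Euc d := a - ⟪a, w⟫ • w with hb
    have hbw : ⟪b, w⟫ = 0 := by
      rw [hb, inner_sub_left, real_inner_smul_left, real_inner_self_eq_norm_sq, hw]
      ring
    have hba : ⟪b, a⟫ = ‖b‖ ^ 2 := by
      have h1 : ⟪b, a - ⟪a, w⟫ • w⟫ = ⟪b, a⟫ - ⟪a, w⟫ * ⟪b, w⟫ := by
        rw [inner_sub_right, real_inner_smul_right]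
      rw [← hb, hbw, mul_zero, sub_zero] at h1
      rw [← h1, real_inner_self_eq_norm_sq]
    by_cases hb0 : b = 0
    · -- need a unit vector orthogonal to w; exists since d ≥ 2
      have hne : (ℝ ∙ w) ≠ ⊤ := by
        intro htop
        have h1 : Module.finrank ℝ (ℝ ∙ w) ≤ 1 := (finrank_span_le_card ({w} : Set (Euc d))).trans (by simp)
        rw [htop] at h1
        have : Module.finrank ℝ (Euc d) = d := by simp
        rw [finrank_top, this] at h1
        omega
      have hbot : (ℝ ∙ w)ᗮ ≠ ⊥ := by
        rw [Ne, Submodule.orthogonal_eq_bot_iff]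
        exact hne
      obtain ⟨x, hx, hx0⟩ := Submodule.exists_mem_ne_zero_of_ne_bot hbot
      have hxw : ⟪x, w⟫ = 0 := by
        rw [real_inner_comm]
        exact hx w (Submodule.mem_span_singleton_self w)
      have hxa : ⟪x, a⟫ = 0 := by
        have : a = ⟪a, w⟫ • w := by
          have := hb0
          rw [hb, sub_eq_zero] at this
          exact this
        rw [this, real_inner_smul_right, hxw, mul_zero]
      refine ⟨‖x‖⁻¹ • x, ?_, ?_, ?_⟩
      · simp [norm_smul, abs_of_nonneg (norm_nonneg x),
          inv_mul_cancel₀ (norm_ne_zero_iff.mpr hx0)]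
      · rw [real_inner_smul_left, hxw, mul_zero]
      · rw [real_inner_smul_left, hxa, mul_zero]
    · refine ⟨‖b‖⁻¹ • b, ?_, ?_, ?_⟩
      · simp [norm_smul, abs_of_nonneg (norm_nonneg b),
          inv_mul_cancel₀ (norm_ne_zero_iff.mpr hb0)]
      · rw [real_inner_smul_left, hbw, mul_zero]
      · rw [real_inner_smul_left, hba]
        positivity

/-- If some closed hemisphere of the sphere of center `c` and radius `r` is disjoint from the
open ball of center `c'` and radius `r' ≥ r`, then `‖c − c'‖² ≥ r'² − r²`. -/
theorem sq_dist_ge_of_hemisphere_outside (d : ℕ) (hd : 2 ≤ d) (c c' : Euc d) (r r' : ℝ)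
    (hr : 0 < r) (hrr' : r ≤ r') (w : Euc d) (hw : ‖w‖ = 1)
    (h : ∀ v : Euc d, ‖v‖ = 1 → 0 ≤ ⟪v, w⟫ → c + r • v ∉ Metric.ball c' r') :
    ‖c - c'‖ ^ 2 ≥ r' ^ 2 - r ^ 2 := by
  obtain ⟨v, hv1, hvw, hva⟩ := exists_unit_nonneg_inner d hd w (c' - c) hw
  have hout := h v hv1 hvw
  rw [Metric.mem_ball, not_lt, dist_eq_norm] at hout
  have key : r' ^ 2 ≤ ‖c + r • v - c'‖ ^ 2 := by
    have h0 : (0:ℝ) ≤ r' := le_trans hr.le hrr'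
    nlinarith [norm_nonneg (c + r • v - c')]
  have expand : ‖c + r • v - c'‖ ^ 2 = ‖c - c'‖ ^ 2 + 2 * r * ⟪c - c', v⟫ + r ^ 2 := by
    have : c + r • v - c' = (c - c') + r • v := by abel
    rw [this, norm_add_sq_real, real_inner_smul_right, norm_smul, Real.norm_eq_abs,
      abs_of_pos hr, hv1]
    ring
  have hcc : ⟪c - c', v⟫ ≤ 0 := by
    have : ⟪c - c', v⟫ = -⟪v, c' - c⟫ := by
      rw [real_inner_comm]
      rw [show c - c' = -(c' - c) by abel, inner_neg_right]
    linarith [hva, this.ge, this.le]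
  nlinarith [key, expand]
end
end

section
/- For every integer d ≥ 1, d · Γ(d²/2) · Γ((d+1)/2) ≥ Γ((d²+1)/2) · Γ(d/2). -/
/-- Log-convexity consequence: `Γ(x + 1/2) ≤ Γ(x) √x` for `x > 0`. -/
lemma gamma_half_shift_le {x : ℝ} (hx : 0 < x) :
    Real.Gamma (x + 1 / 2) ≤ Real.Gamma x * Real.sqrt x := by
  have h := Real.Gamma_mul_add_mul_le_rpow_Gamma_mul_rpow_Gamma
    (s := x) (t := x + 1) (a := 1/2) (b := 1/2) hx (by linarith) (by norm_num)
    (by norm_num) (by norm_num)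
  have hG : 0 < Real.Gamma x := Real.Gamma_pos_of_pos hx
  have h1 : (1/2 : ℝ) * x + 1/2 * (x + 1) = x + 1/2 := by ring
  rw [h1, Real.Gamma_add_one hx.ne'] at h
  have h2 : (x * Real.Gamma x) ^ (1/2 : ℝ)
      = x ^ (1/2 : ℝ) * Real.Gamma x ^ (1/2 : ℝ) :=
    Real.mul_rpow hx.le hG.le
  rw [h2] at h
  calc Real.Gamma (x + 1/2)
      ≤ Real.Gamma x ^ (1/2 : ℝ) * (x ^ (1/2 : ℝ) * Real.Gamma x ^ (1/2 : ℝ)) := h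
    _ = (Real.Gamma x ^ (1/2 : ℝ) * Real.Gamma x ^ (1/2 : ℝ)) * x ^ (1/2 : ℝ) := by ring
    _ = Real.Gamma x * Real.sqrt x := by
        rw [← Real.rpow_add hG, Real.sqrt_eq_rpow]; norm_num

/-- For every integer `d ≥ 1`, `d Γ(d²/2) Γ((d+1)/2) ≥ Γ((d²+1)/2) Γ(d/2)`. -/
theorem gamma_ratio_ge (d : ℕ) (hd : 1 ≤ d) :
    (d : ℝ) * Real.Gamma ((d : ℝ) ^ 2 / 2) * Real.Gamma (((d : ℝ) + 1) / 2) ≥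
      Real.Gamma (((d : ℝ) ^ 2 + 1) / 2) * Real.Gamma ((d : ℝ) / 2) := by
  rcases eq_or_lt_of_le hd with h1 | h2
  · subst_eqs
    norm_num
  · -- d ≥ 2
    set x : ℝ := (d : ℝ) with hxdef
    have hx : (2 : ℝ) ≤ x := by rw [hxdef]; exact_mod_cast h2
    have hx0 : (0 : ℝ) < x := by linarith
    have hGsq : 0 < Real.Gamma (x ^ 2 / 2) := Real.Gamma_pos_of_pos (by positivity)
    have hGh : 0 < Real.Gamma (x / 2) := Real.Gamma_pos_of_pos (by positivity)
    have hGp : 0 < Real.Gamma ((x + 1) / 2) := Real.Gamma_pos_of_pos (by positivity)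
    have hGs : 0 < Real.Gamma ((x ^ 2 + 1) / 2) := Real.Gamma_pos_of_pos (by positivity)
    -- bound 1
    have hb1 : Real.Gamma ((x ^ 2 + 1) / 2) ≤ Real.Gamma (x ^ 2 / 2) * Real.sqrt (x ^ 2 / 2) := by
      have := gamma_half_shift_le (x := x ^ 2 / 2) (by positivity)
      have e : x ^ 2 / 2 + 1 / 2 = (x ^ 2 + 1) / 2 := by ring
      rwa [e] at this
    -- bound 2
    have hb2 : (x / 2) * Real.Gamma (x / 2)
        ≤ Real.Gamma ((x + 1) / 2) * Real.sqrt ((x + 1) / 2) := by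
      have := gamma_half_shift_le (x := (x + 1) / 2) (by positivity)
      have e : (x + 1) / 2 + 1 / 2 = x / 2 + 1 := by ring
      rw [e, Real.Gamma_add_one (by positivity)] at this
      exact this
    -- sqrt bound
    have hs : Real.sqrt (x ^ 2 / 2) * Real.sqrt ((x + 1) / 2) ≤ x * (x / 2) := by
      rw [← Real.sqrt_mul (by positivity)]
      have h4 : x ^ 2 / 2 * ((x + 1) / 2) ≤ (x * (x / 2)) ^ 2 := by nlinarith
      calc Real.sqrt (x ^ 2 / 2 * ((x + 1) / 2)) ≤ Real.sqrt ((x * (x / 2)) ^ 2) :=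
            Real.sqrt_le_sqrt h4
        _ = x * (x / 2) := Real.sqrt_sq (by positivity)
    -- combine
    have key : Real.Gamma ((x ^ 2 + 1) / 2) * ((x / 2) * Real.Gamma (x / 2))
        ≤ (Real.Gamma (x ^ 2 / 2) * Real.Gamma ((x + 1) / 2)) * (x * (x / 2)) := by
      calc Real.Gamma ((x ^ 2 + 1) / 2) * ((x / 2) * Real.Gamma (x / 2))
          ≤ (Real.Gamma (x ^ 2 / 2) * Real.sqrt (x ^ 2 / 2)) *
              (Real.Gamma ((x + 1) / 2) * Real.sqrt ((x + 1) / 2)) := by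
            apply mul_le_mul hb1 hb2 (by positivity) (by positivity)
        _ = (Real.Gamma (x ^ 2 / 2) * Real.Gamma ((x + 1) / 2)) *
              (Real.sqrt (x ^ 2 / 2) * Real.sqrt ((x + 1) / 2)) := by ring
        _ ≤ (Real.Gamma (x ^ 2 / 2) * Real.Gamma ((x + 1) / 2)) * (x * (x / 2)) := by
            apply mul_le_mul_of_nonneg_left hs (by positivity)
    have hx2 : 0 < x / 2 := by linarith
    rw [ge_iff_le]
    nlinarith [mul_pos hGs hGh, key]
end

section
/- Let d ≥ 2 and for t > 0 define I(t) = ∫_t^∞ ∫_r^∞ ∫_0^r ρ^{d²−d−1} (r r')^d ((r² − ρ²)((r')² − ρ²))^{−1/2} · exp(−(κ_d/2)(r^d + (r')^d)) · exp(−(κ_{d−1}/(2d)) r^{d−1} (√(r² − ρ²) + √((r')² − ρ²))) dρ dr' dr. Then, as t → ∞, I(t) = O( t^{d²−2d} e^{−κ_d t^d} ); in particular I(t) = o( t^{d²−d} e^{−κ_d t^d} ). -/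
/-!
Write `a = κ_d / 2`, `c = κ_{d-1} / (2d)` and `b = c r^{d-1}`. After the bound
`ρ^{d²-d-1} ≤ r^{d²-d-2} ρ` and after replacing `ρ` by `r` in the decreasing factor
`(r'² - ρ²)^{-1/2} e^{-b √(r'² - ρ²)}`, both the `ρ`-integral and the `r'`-integral have the form
`∫ x (x² - r²)^{-1/2} e^{-b √(x² - r²)} dx` (up to the sign of `x² - r²`), whose primitive is
`∓ e^{-b √(x² - r²)} / b`; each contributes at most `1 / b`. As `x^n e^{-a x^d}` decreases once
`n ≤ a d x^d`, the factor `r'^{d-1} e^{-a r'^d}` can then be frozen at `r' = r` and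
`r^{d²-2d} e^{-a r^d}` at `r = t`, leaving `∫_t^∞ r^{d-1} e^{-a r^d} dr = e^{-a t^d} / (a d)`.
-/

open MeasureTheory Filter Asymptotics

noncomputable section

/-- `kappa m` is the Lebesgue measure of the unit ball of `ℝ^m`. -/
def kappa (m : ℕ) : ℝ := Real.pi ^ ((m : ℝ) / 2) / Real.Gamma ((m : ℝ) / 2 + 1)

/-- The triple integral `I(t)` controlling the expected number of pairs of far-off pointy
vertices sharing `d−1` nuclei. -/
def Ifun (d : ℕ) (t : ℝ) : ℝ :=
  ∫ r in Set.Ioi t, ∫ r' in Set.Ioi r, ∫ ρ in Set.Ioo (0 : ℝ) r,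
    ρ ^ (d ^ 2 - d - 1) * (r * r') ^ d *
      ((r ^ 2 - ρ ^ 2) * (r' ^ 2 - ρ ^ 2)) ^ (-(1 / 2) : ℝ) *
      Real.exp (-(kappa d / 2) * (r ^ d + r' ^ d)) *
      Real.exp (-(kappa (d - 1) / (2 * (d : ℝ))) * r ^ (d - 1) *
        (Real.sqrt (r ^ 2 - ρ ^ 2) + Real.sqrt (r' ^ 2 - ρ ^ 2)))

open Set Topology Real

lemma kappa_pos (m : ℕ) : 0 < kappa m :=
  div_pos (rpow_pos_of_pos pi_pos _) (Gamma_pos_of_pos (by positivity))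

lemma pow_mul_exp_neg_pow_le_of_le {n d : ℕ} {a x y : ℝ} (ha : 0 ≤ a) (hx : 0 < x)
    (hn : (n : ℝ) ≤ a * d * x ^ d) (hxy : x ≤ y) :
    y ^ n * exp (-a * y ^ d) ≤ x ^ n * exp (-a * x ^ d) := by
  set u := y / x - 1
  have hu : 0 ≤ u := by rw [sub_nonneg, one_le_div hx]; exact hxy
  have hy : y = x * (1 + u) := by simp only [u]; field_simp; ring
  have hyn : y ^ n ≤ x ^ n * exp (n * u) := by
    rw [hy, mul_pow, exp_nat_mul]
    gcongr
    linarith [add_one_le_exp u]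
  have hyd : x ^ d * (1 + d * u) ≤ y ^ d := by
    rw [hy, mul_pow]
    gcongr
    exact one_add_mul_le_pow (by linarith) d
  have hnu : n * u ≤ a * (y ^ d - x ^ d) := by
    nlinarith [mul_le_mul_of_nonneg_right hn hu, mul_le_mul_of_nonneg_left hyd ha]
  calc y ^ n * exp (-a * y ^ d) ≤ x ^ n * exp (n * u) * exp (-a * y ^ d) := by gcongr
    _ = x ^ n * exp (n * u - a * y ^ d) := by rw [mul_assoc, ← exp_add]; ring_nf
    _ ≤ x ^ n * exp (-a * x ^ d) := by gcongr; linarith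

def sqrtKernel (b s : ℝ) : ℝ := s ^ (-(1 / 2) : ℝ) * exp (-b * √s)

lemma sqrtKernel_nonneg (b : ℝ) {s : ℝ} (hs : 0 ≤ s) : 0 ≤ sqrtKernel b s :=
  mul_nonneg (rpow_nonneg hs _) (exp_nonneg _)

lemma sqrtKernel_le_of_le {b s s' : ℝ} (hb : 0 ≤ b) (hs : 0 < s) (hss' : s ≤ s') :
    sqrtKernel b s' ≤ sqrtKernel b s := by
  have hexp : -b * √s' ≤ -b * √s := by nlinarith [sqrt_le_sqrt hss']
  exact mul_le_mul (rpow_le_rpow_of_nonpos hs hss' (by norm_num)) (exp_le_exp.2 hexp)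
    (exp_nonneg _) (rpow_nonneg hs.le _)

lemma hasDerivAt_exp_neg_mul_sqrt {g : ℝ → ℝ} {g' x : ℝ} (b : ℝ) (hg : HasDerivAt g g' x)
    (hx : 0 < g x) :
    HasDerivAt (fun y => exp (-b * √(g y))) (-(b / 2) * g' * sqrtKernel b (g x)) x := by
  convert ((hg.sqrt hx.ne').const_mul (-b)).exp using 1
  rw [sqrtKernel, rpow_neg hx.le, ← sqrt_eq_rpow]
  field_simp

lemma integral_Ioo_mul_sqrtKernel {b r : ℝ} (hb : 0 < b) (hr : 0 ≤ r) :
    IntegrableOn (fun ρ => ρ * sqrtKernel b (r ^ 2 - ρ ^ 2)) (Ioo 0 r) ∧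
      ∫ ρ in Ioo 0 r, ρ * sqrtKernel b (r ^ 2 - ρ ^ 2) = (1 - exp (-b * r)) / b := by
  have hcont : ContinuousOn (fun ρ => b⁻¹ * exp (-b * √(r ^ 2 - ρ ^ 2))) (Icc 0 r) := by
    fun_prop
  have hderiv : ∀ ρ ∈ Ioo 0 r, HasDerivAt (fun ρ => b⁻¹ * exp (-b * √(r ^ 2 - ρ ^ 2)))
      (ρ * sqrtKernel b (r ^ 2 - ρ ^ 2)) ρ := by
    rintro ρ ⟨hρ, hρr⟩
    have hg : HasDerivAt (fun ρ => r ^ 2 - ρ ^ 2) (-(2 * ρ)) ρ := by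
      simpa using (hasDerivAt_pow 2 ρ).const_sub (r ^ 2)
    refine ((hasDerivAt_exp_neg_mul_sqrt b hg (by nlinarith)).const_mul b⁻¹).congr_deriv ?_
    field_simp
  have hnonneg : ∀ ρ ∈ Ioo 0 r, 0 ≤ ρ * sqrtKernel b (r ^ 2 - ρ ^ 2) := fun ρ ⟨hρ, hρr⟩ =>
    mul_nonneg hρ.le (sqrtKernel_nonneg b (by nlinarith))
  have hint := intervalIntegral.integrableOn_deriv_of_nonneg hcont hderiv hnonneg
  refine ⟨hint.mono_set Ioo_subset_Ioc_self, ?_⟩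
  rw [← integral_Ioc_eq_integral_Ioo, ← intervalIntegral.integral_of_le hr,
    intervalIntegral.integral_eq_sub_of_hasDerivAt_of_le hr hcont hderiv
      ((intervalIntegrable_iff_integrableOn_Ioc_of_le hr).2 hint)]
  rw [sub_self, zero_pow two_ne_zero, sub_zero, sqrt_zero, sqrt_sq hr, mul_zero, exp_zero]
  ring

lemma integral_Ioi_mul_sqrtKernel {b r : ℝ} (hb : 0 < b) (hr : 0 ≤ r) :
    IntegrableOn (fun x => x * sqrtKernel b (x ^ 2 - r ^ 2)) (Ioi r) ∧
      ∫ x in Ioi r, x * sqrtKernel b (x ^ 2 - r ^ 2) = 1 / b := by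
  have hcont :
      ContinuousWithinAt (fun x => -(b⁻¹ * exp (-b * √(x ^ 2 - r ^ 2)))) (Ici r) r := by
    fun_prop
  have hderiv : ∀ x ∈ Ioi r, HasDerivAt (fun x => -(b⁻¹ * exp (-b * √(x ^ 2 - r ^ 2))))
      (x * sqrtKernel b (x ^ 2 - r ^ 2)) x := by
    intro x (hx : r < x)
    have hg : HasDerivAt (fun x => x ^ 2 - r ^ 2) (2 * x) x := by
      simpa using (hasDerivAt_pow 2 x).sub_const (r ^ 2)
    refine ((hasDerivAt_exp_neg_mul_sqrt b hg (by nlinarith)).const_mul b⁻¹).neg.congr_deriv ?_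
    field_simp
  have hnonneg : ∀ x ∈ Ioi r, 0 ≤ x * sqrtKernel b (x ^ 2 - r ^ 2) := fun x (hx : r < x) =>
    mul_nonneg (by linarith) (sqrtKernel_nonneg b (by nlinarith))
  have hlim : Tendsto (fun x => -(b⁻¹ * exp (-b * √(x ^ 2 - r ^ 2)))) atTop (𝓝 0) := by
    have hsqrt : Tendsto (fun x => √(x ^ 2 - r ^ 2)) atTop atTop :=
      tendsto_sqrt_atTop.comp (tendsto_atTop_add_const_right _ _ (tendsto_pow_atTop two_ne_zero))
    simpa using ((tendsto_exp_atBot.comp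
      (hsqrt.const_mul_atTop_of_neg (neg_lt_zero.2 hb))).const_mul b⁻¹).neg
  refine ⟨integrableOn_Ioi_deriv_of_nonneg hcont hderiv hnonneg hlim, ?_⟩
  rw [integral_Ioi_of_hasDerivAt_of_nonneg hcont hderiv hnonneg hlim]
  simp

lemma integral_Ioi_pow_mul_exp_neg_pow {a t : ℝ} {d : ℕ} (ha : 0 < a) (hd : d ≠ 0)
    (ht : 0 ≤ t) :
    IntegrableOn (fun x => x ^ (d - 1) * exp (-a * x ^ d)) (Ioi t) ∧
      ∫ x in Ioi t, x ^ (d - 1) * exp (-a * x ^ d) = exp (-a * t ^ d) / (a * d) := by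
  have hcont : ContinuousWithinAt (fun x => -(exp (-a * x ^ d) / (a * d))) (Ici t) t := by
    fun_prop
  have hderiv : ∀ x ∈ Ioi t, HasDerivAt (fun x => -(exp (-a * x ^ d) / (a * d)))
      (x ^ (d - 1) * exp (-a * x ^ d)) x := by
    intro x _
    refine ((((hasDerivAt_pow d x).const_mul (-a)).exp).div_const (a * d)).neg.congr_deriv ?_
    have : (d : ℝ) ≠ 0 := by exact_mod_cast hd
    field_simp
  have hnonneg : ∀ x ∈ Ioi t, 0 ≤ x ^ (d - 1) * exp (-a * x ^ d) := fun x (hx : t < x) =>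
    mul_nonneg (pow_nonneg (by linarith) _) (exp_nonneg _)
  have hlim : Tendsto (fun x => -(exp (-a * x ^ d) / (a * d))) atTop (𝓝 0) := by
    simpa using ((tendsto_exp_atBot.comp ((tendsto_pow_atTop hd).const_mul_atTop_of_neg
      (neg_lt_zero.2 ha))).div_const (a * d)).neg
  refine ⟨integrableOn_Ioi_deriv_of_nonneg hcont hderiv hnonneg hlim, ?_⟩
  rw [integral_Ioi_of_hasDerivAt_of_nonneg hcont hderiv hnonneg hlim]
  simp

def tripleIntegrand (d : ℕ) (a c r r' ρ : ℝ) : ℝ :=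
  ρ ^ (d ^ 2 - d - 1) * (r * r') ^ d * ((r ^ 2 - ρ ^ 2) * (r' ^ 2 - ρ ^ 2)) ^ (-(1 / 2) : ℝ) *
    exp (-a * (r ^ d + r' ^ d)) *
    exp (-c * r ^ (d - 1) * (√(r ^ 2 - ρ ^ 2) + √(r' ^ 2 - ρ ^ 2)))

def tripleIntegral (d : ℕ) (a c t : ℝ) : ℝ :=
  ∫ r in Ioi t, ∫ r' in Ioi r, ∫ ρ in Ioo 0 r, tripleIntegrand d a c r r' ρ

lemma Ifun_eq_tripleIntegral (d : ℕ) :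
    Ifun d = tripleIntegral d (kappa d / 2) (kappa (d - 1) / (2 * d)) :=
  rfl

section TripleIntegral

variable {d : ℕ} {a c r r' ρ t : ℝ}

lemma tripleIntegrand_eq (hρ : 0 ≤ ρ) (hρr : ρ ≤ r) (hrr' : r ≤ r') :
    tripleIntegrand d a c r r' ρ = ρ ^ (d ^ 2 - d - 1) * (r * r') ^ d *
      exp (-a * r ^ d) * exp (-a * r' ^ d) *
      sqrtKernel (c * r ^ (d - 1)) (r ^ 2 - ρ ^ 2) *
      sqrtKernel (c * r ^ (d - 1)) (r' ^ 2 - ρ ^ 2) := by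
  rw [tripleIntegrand, sqrtKernel, sqrtKernel, mul_rpow (by nlinarith) (by nlinarith)]
  simp only [mul_add, exp_add]
  ring_nf

lemma tripleIntegrand_nonneg (hρ : 0 < ρ) (hρr : ρ < r) (hrr' : r ≤ r') :
    0 ≤ tripleIntegrand d a c r r' ρ := by
  rw [tripleIntegrand_eq hρ.le hρr.le hrr']
  have := sqrtKernel_nonneg (c * r ^ (d - 1)) (show 0 ≤ r ^ 2 - ρ ^ 2 by nlinarith)
  have := sqrtKernel_nonneg (c * r ^ (d - 1)) (show 0 ≤ r' ^ 2 - ρ ^ 2 by nlinarith)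
  have : 0 ≤ r * r' := by nlinarith
  positivity

lemma integral_tripleIntegrand_nonneg (hrr' : r ≤ r') :
    0 ≤ ∫ ρ in Ioo 0 r, tripleIntegrand d a c r r' ρ :=
  setIntegral_nonneg measurableSet_Ioo fun _ hρ => tripleIntegrand_nonneg hρ.1 hρ.2 hrr'

lemma tripleIntegrand_le (hd : 2 ≤ d) (hc : 0 ≤ c) (hρ : 0 < ρ) (hρr : ρ < r) (hrr' : r < r') :
    tripleIntegrand d a c r r' ρ ≤ r ^ (d ^ 2 - d - 2) * (r * r') ^ d *
      exp (-a * r ^ d) * exp (-a * r' ^ d) * sqrtKernel (c * r ^ (d - 1)) (r' ^ 2 - r ^ 2) *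
      (ρ * sqrtKernel (c * r ^ (d - 1)) (r ^ 2 - ρ ^ 2)) := by
  have hr : 0 < r := hρ.trans hρr
  have hpow : ρ ^ (d ^ 2 - d - 1) = ρ ^ (d ^ 2 - d - 2) * ρ := by
    rw [← pow_succ]
    congr 1
    have : 2 * d ≤ d ^ 2 := by nlinarith
    omega
  have hkernel := sqrtKernel_le_of_le (b := c * r ^ (d - 1)) (by positivity)
    (show 0 < r' ^ 2 - r ^ 2 by nlinarith) (show r' ^ 2 - r ^ 2 ≤ r' ^ 2 - ρ ^ 2 by nlinarith)
  have := sqrtKernel_nonneg (c * r ^ (d - 1)) (show 0 ≤ r ^ 2 - ρ ^ 2 by nlinarith)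
  have := sqrtKernel_nonneg (c * r ^ (d - 1)) (show 0 ≤ r' ^ 2 - ρ ^ 2 by nlinarith)
  have : 0 ≤ r * r' := by nlinarith
  rw [tripleIntegrand_eq hρ.le hρr.le hrr'.le, hpow]
  calc _ = ρ ^ (d ^ 2 - d - 2) * (r * r') ^ d * exp (-a * r ^ d) * exp (-a * r' ^ d) *
        sqrtKernel (c * r ^ (d - 1)) (r' ^ 2 - ρ ^ 2) *
        (ρ * sqrtKernel (c * r ^ (d - 1)) (r ^ 2 - ρ ^ 2)) := by ring
    _ ≤ _ := by gcongr

lemma integral_tripleIntegrand_le (hd : 2 ≤ d) (hc : 0 < c) (hr : 0 < r) (hrr' : r < r') :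
    ∫ ρ in Ioo 0 r, tripleIntegrand d a c r r' ρ ≤ r ^ (d ^ 2 - d - 2) * (r * r') ^ d *
      exp (-a * r ^ d) * exp (-a * r' ^ d) * sqrtKernel (c * r ^ (d - 1)) (r' ^ 2 - r ^ 2) /
        (c * r ^ (d - 1)) := by
  set b := c * r ^ (d - 1)
  have hb : 0 < b := by positivity
  obtain ⟨hint, hval⟩ := integral_Ioo_mul_sqrtKernel hb hr.le
  have hM : 0 ≤ r ^ (d ^ 2 - d - 2) * (r * r') ^ d * exp (-a * r ^ d) * exp (-a * r' ^ d) *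
      sqrtKernel b (r' ^ 2 - r ^ 2) := by
    have := sqrtKernel_nonneg b (show 0 ≤ r' ^ 2 - r ^ 2 by nlinarith)
    have : 0 ≤ r * r' := by nlinarith
    positivity
  refine (setIntegral_mono_of_nonneg (fun ρ hρ => tripleIntegrand_nonneg hρ.1 hρ.2 hrr'.le)
    (fun ρ hρ => tripleIntegrand_le hd hc.le hρ.1 hρ.2 hrr') (hint.const_mul _)).trans ?_
  rw [integral_const_mul, hval]
  exact (mul_le_mul_of_nonneg_left (div_le_div_of_nonneg_right
    (by linarith [exp_pos (-b * r)]) hb.le) hM).trans_eq (mul_one_div _ _)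

lemma integral_integral_tripleIntegrand_nonneg (d : ℕ) (a c r : ℝ) :
    0 ≤ ∫ r' in Ioi r, ∫ ρ in Ioo 0 r, tripleIntegrand d a c r r' ρ :=
  setIntegral_nonneg measurableSet_Ioi fun _ hr' =>
    integral_tripleIntegrand_nonneg (le_of_lt hr')

lemma tripleIntegral_nonneg (d : ℕ) (a c t : ℝ) : 0 ≤ tripleIntegral d a c t :=
  integral_nonneg fun r => integral_integral_tripleIntegrand_nonneg d a c r

lemma integral_integral_tripleIntegrand_le (hd : 2 ≤ d) (ha : 0 ≤ a) (hc : 0 < c) (hr : 0 < r)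
    (hdr : ((d - 1 : ℕ) : ℝ) ≤ a * d * r ^ d) :
    ∫ r' in Ioi r, ∫ ρ in Ioo 0 r, tripleIntegrand d a c r r' ρ ≤
      c⁻¹ ^ 2 * (r ^ (d ^ 2 - 2 * d) * exp (-a * r ^ d)) * (r ^ (d - 1) * exp (-a * r ^ d)) := by
  set b := c * r ^ (d - 1)
  have hb : 0 < b := by positivity
  obtain ⟨hint, hval⟩ := integral_Ioi_mul_sqrtKernel hb hr.le
  set M := r ^ (d ^ 2 - d - 2) * r ^ d * exp (-a * r ^ d) * (r ^ (d - 1) * exp (-a * r ^ d)) / b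
  have hpt : ∀ r' ∈ Ioi r, ∫ ρ in Ioo 0 r, tripleIntegrand d a c r r' ρ ≤
      M * (r' * sqrtKernel b (r' ^ 2 - r ^ 2)) := by
    intro r' (hr' : r < r')
    have hK := sqrtKernel_nonneg b (show 0 ≤ r' ^ 2 - r ^ 2 by nlinarith)
    have hr'd : r' ^ d = r' * r' ^ (d - 1) := by rw [← pow_succ']; congr 1; omega
    refine (integral_tripleIntegrand_le hd hc hr hr').trans ?_
    calc _ = r ^ (d ^ 2 - d - 2) * r ^ d * exp (-a * r ^ d) *
          (r' * sqrtKernel b (r' ^ 2 - r ^ 2)) / b * (r' ^ (d - 1) * exp (-a * r' ^ d)) := by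
          rw [mul_pow, hr'd]; ring
      _ ≤ r ^ (d ^ 2 - d - 2) * r ^ d * exp (-a * r ^ d) *
          (r' * sqrtKernel b (r' ^ 2 - r ^ 2)) / b * (r ^ (d - 1) * exp (-a * r ^ d)) :=
        mul_le_mul_of_nonneg_left (pow_mul_exp_neg_pow_le_of_le ha hr hdr hr'.le)
          (div_nonneg (mul_nonneg (by positivity) (mul_nonneg (hr.trans hr').le hK)) hb.le)
      _ = _ := by ring
  have hexp : r ^ (d ^ 2 - d - 2) * r ^ d = r ^ (d ^ 2 - 2 * d) * r ^ (d - 1) * r ^ (d - 1) := by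
    simp only [← pow_add]
    congr 1
    have : 2 * d ≤ d ^ 2 := by nlinarith
    omega
  calc _ ≤ ∫ r' in Ioi r, M * (r' * sqrtKernel b (r' ^ 2 - r ^ 2)) :=
        setIntegral_mono_of_nonneg (fun _ hr' => integral_tripleIntegrand_nonneg (le_of_lt hr'))
          hpt (hint.const_mul M)
    _ = M / b := by rw [integral_const_mul, hval, mul_one_div]
    _ = _ := by
      simp only [M, b]
      rw [hexp]
      field_simp

lemma tripleIntegral_le (hd : 2 ≤ d) (ha : 0 < a) (hc : 0 < c) (ht : 0 < t)
    (hdt : (d : ℝ) ≤ a * t ^ d) :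
    tripleIntegral d a c t ≤
      c⁻¹ ^ 2 * (a * d)⁻¹ * (t ^ (d ^ 2 - 2 * d) * exp (-(2 * a) * t ^ d)) := by
  have hgrowth : ∀ {n : ℕ} {x : ℝ}, n ≤ d * d → t ≤ x → (n : ℝ) ≤ a * d * x ^ d := by
    intro n x hn htx
    have : a * t ^ d ≤ a * x ^ d := by gcongr
    have : (n : ℝ) ≤ d * d := by exact_mod_cast hn
    nlinarith
  obtain ⟨hint, hval⟩ := integral_Ioi_pow_mul_exp_neg_pow ha (by omega : d ≠ 0) ht.le
  set C := c⁻¹ ^ 2 * (t ^ (d ^ 2 - 2 * d) * exp (-a * t ^ d))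
  have hpt : ∀ r ∈ Ioi t, ∫ r' in Ioi r, ∫ ρ in Ioo 0 r, tripleIntegrand d a c r r' ρ ≤
      C * (r ^ (d - 1) * exp (-a * r ^ d)) := by
    intro r (htr : t < r)
    have hr : 0 < r := ht.trans htr
    refine (integral_integral_tripleIntegrand_le hd ha.le hc hr
      (hgrowth ((Nat.sub_le d 1).trans (Nat.le_mul_self d)) htr.le)).trans ?_
    have hdecay := pow_mul_exp_neg_pow_le_of_le ha.le ht
      (hgrowth ((Nat.sub_le _ (2 * d)).trans (sq d).le) le_rfl) htr.le
    exact mul_le_mul_of_nonneg_right (mul_le_mul_of_nonneg_left hdecay (by positivity))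
      (by positivity)
  calc tripleIntegral d a c t ≤ ∫ r in Ioi t, C * (r ^ (d - 1) * exp (-a * r ^ d)) :=
        setIntegral_mono_of_nonneg (fun r _ => integral_integral_tripleIntegrand_nonneg d a c r)
          hpt (hint.const_mul C)
    _ = C * (exp (-a * t ^ d) / (a * d)) := by rw [integral_const_mul, hval]
    _ = _ := by
      rw [show -(2 * a) * t ^ d = -a * t ^ d + -a * t ^ d by ring, exp_add]
      simp only [C]
      field_simp

lemma tripleIntegral_isBigO (hd : 2 ≤ d) (ha : 0 < a) (hc : 0 < c) :
    tripleIntegral d a c =O[atTop] fun t => t ^ (d ^ 2 - 2 * d) * exp (-(2 * a) * t ^ d) := by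
  have hdt : ∀ᶠ t in atTop, (d : ℝ) ≤ a * t ^ d :=
    ((tendsto_pow_atTop (by omega)).const_mul_atTop ha).eventually_ge_atTop _
  refine IsBigO.of_bound (c⁻¹ ^ 2 * (a * d)⁻¹) ?_
  filter_upwards [eventually_gt_atTop 0, hdt] with t ht hdt
  rw [norm_of_nonneg (tripleIntegral_nonneg d a c t), norm_of_nonneg (by positivity)]
  exact tripleIntegral_le hd ha hc ht hdt

end TripleIntegral

/-- As `t → ∞`, `I(t) = O(t^{d²−2d} e^{−κ_d t^d})`; in particular
`I(t) = o(t^{d²−d} e^{−κ_d t^d})`. -/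
theorem Ifun_isBigO (d : ℕ) (hd : 2 ≤ d) :
    (Ifun d) =O[atTop] (fun t : ℝ => t ^ (d ^ 2 - 2 * d) * Real.exp (-kappa d * t ^ d)) ∧
      (Ifun d) =o[atTop] (fun t : ℝ => t ^ (d ^ 2 - d) * Real.exp (-kappa d * t ^ d)) := by
  have hd0 : (0 : ℝ) < 2 * d := by norm_cast; omega
  have hbig := tripleIntegral_isBigO hd (half_pos (kappa_pos d)) (div_pos (kappa_pos (d - 1)) hd0)
  rw [mul_div_cancel₀ _ two_ne_zero, ← Ifun_eq_tripleIntegral] at hbig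
  refine ⟨hbig, hbig.trans_isLittleO
    ((isLittleO_pow_pow_atTop_of_lt ?_).mul_isBigO (isBigO_refl _ _))⟩
  have : 2 * d ≤ d ^ 2 := by nlinarith
  omega
end
end
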